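/- arXiv:1211.1547 — 2 statements merged into one kernel-verified Lean document; each statement's English description precedes it below -/
import Mathlib

section
/- Assume (A1): for every x ∈ 𝕏 and u ∈ 𝕌 there exists θ ∈ Θ with T(x) = T(a(θ,u)). Then for every x ∈ 𝕏, the set {u ∈ 𝕌 : g(u) < T(x)} is contained in {u ∈ 𝕌 : Θ_x(u) ≠ ∅ and Θ_x(u) ⊆ Θ ∖ Θ0}; consequently, taking closures, S_{T(x)} ⊆ 𝕌_x(Θ ∖ Θ0). -/
open Set

lemma setOf_eq_subset_compl_of_lt {Θ : Type*} {f : Θ → ℝ} {s : Set Θ} {b t : ℝ}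
    (hb : b ∈ upperBounds {r | ∃ θ ∈ s, r = f θ}) (ht : b < t) :
    {θ | t = f θ} ⊆ sᶜ := by
  rintro θ rfl hθ
  exact (hb ⟨θ, hθ, rfl⟩).not_gt ht

theorem S_Tx_subset_Ux_general
    {U : Type*} [TopologicalSpace U]
    {Θ 𝕏 : Type*} (a : Θ → U → 𝕏) (T : 𝕏 → ℝ) (Θ0 : Set Θ)
    -- g(u) = sup_{θ ∈ Θ0} T(a(θ,u)), assumed finite
    (g : U → ℝ)
    (hg : ∀ u, IsLUB {r : ℝ | ∃ θ ∈ Θ0, r = T (a θ u)} (g u))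
    -- (A1)
    (A1 : ∀ (x : 𝕏) (u : U), ∃ θ : Θ, T x = T (a θ u)) :
    ∀ x : 𝕏,
      {u | g u < T x} ⊆
        {u | {θ | T x = T (a θ u)}.Nonempty ∧ {θ | T x = T (a θ u)} ⊆ Θ0ᶜ} ∧
      closure {u | g u < T x} ⊆ closure {u | {θ | T x = T (a θ u)} ⊆ Θ0ᶜ} := by
  intro x
  have hsub : {u | g u < T x} ⊆
      {u | {θ | T x = T (a θ u)}.Nonempty ∧ {θ | T x = T (a θ u)} ⊆ Θ0ᶜ} :=
    fun u hu => ⟨A1 x u, setOf_eq_subset_compl_of_lt (hg u).1 hu⟩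
  exact ⟨hsub, closure_mono fun u hu => (hsub hu).2⟩

/-- Under A1, `{u : g(u) < T(x)} ⊆ {u : Θ_x(u) ≠ ∅ and Θ_x(u) ⊆ Θ ∖ Θ0}`;
consequently, taking closures, `S_{T(x)} ⊆ 𝕌_x(Θ ∖ Θ0)`. -/
theorem S_Tx_subset_Ux
    {U : Type*} [TopologicalSpace U]
    {Θ 𝕏 : Type*} (a : Θ → U → 𝕏) (T : 𝕏 → ℝ) (Θ0 : Set Θ)
    (hΘ0 : Θ0.Nonempty)
    -- g(u) = sup_{θ ∈ Θ0} T(a(θ,u)), assumed finite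
    (g : U → ℝ)
    (hg : ∀ u, IsLUB {r : ℝ | ∃ θ ∈ Θ0, r = T (a θ u)} (g u))
    -- (A1)
    (A1 : ∀ (x : 𝕏) (u : U), ∃ θ : Θ, T x = T (a θ u)) :
    ∀ x : 𝕏,
      {u | g u < T x} ⊆
        {u | {θ | T x = T (a θ u)}.Nonempty ∧ {θ | T x = T (a θ u)} ⊆ Θ0ᶜ} ∧
      closure {u | g u < T x} ⊆ closure {u | {θ | T x = T (a θ u)} ⊆ Θ0ᶜ} :=
  S_Tx_subset_Ux_general a T Θ0 g hg A1
end

section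
/- Assume each S_t is measurable and, for the fixed θ and A with θ ∈ A, the map u ↦ Q(𝕌_{a(θ,u)}(Θ ∖ A)) is measurable. Then the inferential model is valid at A in the sense that for every α ∈ (0,1): P_U{u ∈ 𝕌 : pl_{a(θ,u)}(A) ≤ α} ≤ α, where pl_x(A) = 1 − Q(𝕌_x(Θ ∖ A)). -/
/-!
Since `θ` solves `T (a θ u) = T (a θ u)`, the point `u` never lies in its own set
`𝕌_{a(θ,u)}(Θ ∖ A)`, hence in none of the `S_t` contained in it. So if the belief of that set
exceeds `c`, then `u` misses some `S_t` with `P(S_t) > c`. These sets are nested, so by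
continuity from below along `t ↓` the complements of all of them together have probability
at most `1 - c`.
-/

open MeasureTheory Set ENNReal

noncomputable def nestedBelief {U : Type*} [MeasurableSpace U] (μ : Measure U)
    (S : ℝ → Set U) (K : Set U) : ℝ≥0∞ :=
  ⨆ t ∈ {t : ℝ | S t ⊆ K}, μ (S t)

theorem measure_setOf_lt_nestedBelief_le {U : Type*} [MeasurableSpace U] (μ : Measure U)
    [IsFiniteMeasure μ] {S : ℝ → Set U} (hSmeas : ∀ t, MeasurableSet (S t))
    (hSmono : Monotone S) {K : U → Set U} (hK : ∀ u, u ∉ K u) (c : ℝ≥0∞) :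
    μ {u | c < nestedBelief μ S (K u)} ≤ μ univ - c := by
  set T : Set ℝ := {t | c < μ (S t)}
  have hT : IsUpperSet T := fun s t hst hs => hs.trans_le (measure_mono (hSmono hst))
  -- gives `T` the order topology, so that `atBot` on `T` is countably generated
  have := hT.ordConnected
  have hsub : {u | c < nestedBelief μ S (K u)} ⊆ ⋃ t : T, (S t)ᶜ := by
    intro u hu
    obtain ⟨t, htK, hct⟩ := lt_biSup_iff.mp (show c < nestedBelief μ S (K u) from hu)
    exact mem_iUnion.mpr ⟨⟨t, hct⟩, fun hut => hK u (htK hut)⟩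
  have hanti : Antitone fun t : T => (S t)ᶜ := fun s t hst => compl_subset_compl.mpr (hSmono hst)
  calc μ {u | c < nestedBelief μ S (K u)} ≤ μ (⋃ t : T, (S t)ᶜ) := measure_mono hsub
    _ = ⨆ t : T, μ (S t)ᶜ := hanti.measure_iUnion
    _ ≤ μ univ - c := iSup_le fun t => by
      rw [measure_compl (hSmeas t) (measure_ne_top μ _)]
      exact tsub_le_tsub_left t.2.le _

theorem IM_validity_general
    {U : Type*} [MeasurableSpace U]
    (P : Measure U) [IsProbabilityMeasure P]
    {Θ 𝕏 : Type*} (a : Θ → U → 𝕏) (T : 𝕏 → ℝ)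
    -- (S_t) a nondecreasing family of measurable subsets of 𝕌
    (S : ℝ → Set U)
    (hSmeas : ∀ t : ℝ, MeasurableSet (S t))
    (hSmono : Monotone S)
    -- 𝕌_x(B) = {u : Θ_x(u) ⊆ B} (no closure taken)
    (Ux : 𝕏 → Set Θ → Set U)
    (hUx : ∀ x B, Ux x B = {u | {θ | T x = T (a θ u)} ⊆ B})
    -- Q(K) = sup({P(S_t) : S_t ⊆ K} ∪ {0})
    (Q : Set U → ℝ≥0∞)
    (hQ : ∀ K : Set U, Q K = ⨆ t ∈ {t : ℝ | S t ⊆ K}, P (S t))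
    -- fixed assertion A and true parameter value θ ∈ A
    (A : Set Θ) (θ : Θ) (hθ : θ ∈ A) :
    ∀ α : ℝ≥0∞, α ∈ Set.Ioo (0 : ℝ≥0∞) 1 →
      P {u | 1 - Q (Ux (a θ u) Aᶜ) ≤ α} ≤ α := by
  obtain rfl : Q = nestedBelief P S := funext hQ
  intro α ⟨_, hα1⟩
  have hself : ∀ u, u ∉ Ux (a θ u) Aᶜ := fun u hu => by
    rw [hUx] at hu
    exact hu rfl hθ
  refine ENNReal.le_of_forall_pos_le_add fun ε hε _ => ?_
  have hgap : 1 - (α + ε) < 1 - α := by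
    rw [tsub_add_eq_tsub_tsub]
    exact ENNReal.sub_lt_self (by simp) (tsub_pos_of_lt hα1).ne' (by exact_mod_cast hε.ne')
  have hsub : {u | 1 - nestedBelief P S (Ux (a θ u) Aᶜ) ≤ α} ⊆
      {u | 1 - (α + ε) < nestedBelief P S (Ux (a θ u) Aᶜ)} :=
    fun u hu => hgap.trans_le (tsub_le_iff_tsub_le.mp hu)
  calc P _ ≤ P univ - (1 - (α + ε)) :=
        (measure_mono hsub).trans (measure_setOf_lt_nestedBelief_le P hSmeas hSmono hself _)
    _ ≤ α + ε := by rw [measure_univ]; exact tsub_tsub_le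

/-- **IM validity (Theorem 1 of the paper).**
For a nested family `(S_t)` of measurable predictive sets and the plausibility
`pl_x(A) = 1 − Q(𝕌_x(Θ∖A))`, if `θ ∈ A` then for every `α ∈ (0,1)`,
`P_U{u : pl_{a(θ,u)}(A) ≤ α} ≤ α`. -/
theorem IM_validity
    {U : Type*} [MeasurableSpace U]
    (P : Measure U) [IsProbabilityMeasure P]
    {Θ 𝕏 : Type*} (a : Θ → U → 𝕏) (T : 𝕏 → ℝ)
    -- (S_t) a nondecreasing family of measurable subsets of 𝕌
    (S : ℝ → Set U)
    (hSmeas : ∀ t : ℝ, MeasurableSet (S t))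
    (hSmono : Monotone S)
    -- 𝕌_x(B) = {u : Θ_x(u) ⊆ B} (no closure taken)
    (Ux : 𝕏 → Set Θ → Set U)
    (hUx : ∀ x B, Ux x B = {u | {θ | T x = T (a θ u)} ⊆ B})
    -- Q(K) = sup({P(S_t) : S_t ⊆ K} ∪ {0})
    (Q : Set U → ℝ≥0∞)
    (hQ : ∀ K : Set U, Q K = ⨆ t ∈ {t : ℝ | S t ⊆ K}, P (S t))
    -- fixed assertion A and true parameter value θ ∈ A
    (A : Set Θ) (θ : Θ) (hθ : θ ∈ A)
    -- measurability of u ↦ Q(𝕌_{a(θ,u)}(Θ ∖ A))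
    (hmeas : Measurable fun u => Q (Ux (a θ u) Aᶜ)) :
    ∀ α : ℝ≥0∞, α ∈ Set.Ioo (0 : ℝ≥0∞) 1 →
      P {u | 1 - Q (Ux (a θ u) Aᶜ) ≤ α} ≤ α :=
  IM_validity_general P a T S hSmeas hSmono Ux hUx Q hQ A θ hθ
end
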